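/- For a matrix A with unit-norm columns, the 2-restricted isometry constant equals the mutual incoherence: δ₂(A) = M(A). -/

import Mathlib

open Classical Kronecker

/-- Number of nonzero entries of a vector. -/
noncomputable def sparsity {n : Type*} (x : n → ℝ) : ℕ := Set.ncard {i | x i ≠ 0}

/-- The spark of a matrix: the minimal number of nonzero entries of a nonzero kernel
vector; if the kernel is trivial we use the convention `spark A = (number of columns) + 1`. -/
noncomputable def spark {m n : Type*} [Fintype m] [Fintype n] (A : Matrix m n ℝ) : ℕ :=
  if ∃ x : n → ℝ, x ≠ 0 ∧ A.mulVec x = 0 then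
    sInf {k | ∃ x : n → ℝ, x ≠ 0 ∧ A.mulVec x = 0 ∧ sparsity x = k}
  else Fintype.card n + 1

/-- Mutual incoherence: the largest absolute inner product of two distinct columns. -/
noncomputable def mutInc {m n : Type*} [Fintype m] (A : Matrix m n ℝ) : ℝ :=
  sSup {v | ∃ i j, i ≠ j ∧ v = |∑ k, A k i * A k j|}

/-- Off-diagonal mutual incoherence of two matrices. -/
noncomputable def mutIncOD {m n : Type*} [Fintype m] (A B : Matrix m n ℝ) : ℝ :=
  sSup {v | ∃ i j, i ≠ j ∧ v = |∑ k, A k i * B k j|}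

/-- Diagonal mutual incoherence of two matrices. -/
noncomputable def mutIncD {m n : Type*} [Fintype m] (A B : Matrix m n ℝ) : ℝ :=
  sSup {v | ∃ i, v = |∑ k, A k i * B k i|}

/-- Mutual incoherence of a matrix whose columns are renormalized. -/
noncomputable def mutIncN {m n : Type*} [Fintype m] (C : Matrix m n ℝ) : ℝ :=
  sSup {v | ∃ i j, i ≠ j ∧
    v = |∑ k, C k i * C k j| /
        (Real.sqrt (∑ k, (C k i) ^ 2) * Real.sqrt (∑ k, (C k j) ^ 2))}

/-- The `k`-restricted isometry constant of a matrix. -/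
noncomputable def ripConst {m n : Type*} [Fintype m] [Fintype n] (k : ℕ)
    (A : Matrix m n ℝ) : ℝ :=
  sInf {δ | 0 ≤ δ ∧ ∀ x : n → ℝ, sparsity x ≤ k →
    (1 - δ) * ∑ i, (x i) ^ 2 ≤ ∑ i, (A.mulVec x i) ^ 2 ∧
    ∑ i, (A.mulVec x i) ^ 2 ≤ (1 + δ) * ∑ i, (x i) ^ 2}

/-- Iterated Kronecker product of a family of matrices (up to the standard
reindexing of the row/column index sets). -/
noncomputable def kronFamily {N : ℕ} {m n : Fin N → ℕ}
    (A : ∀ i, Matrix (Fin (m i)) (Fin (n i)) ℝ) :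
    Matrix (∀ i, Fin (m i)) (∀ i, Fin (n i)) ℝ :=
  fun r c => ∏ i, A i (r i) (c i)


/-!
Let `G = AᵀA` be the Gram matrix, whose diagonal is `1` since the columns are unit vectors. Then
`‖Ax‖² - ‖x‖² = ∑_{l ≠ l'} x_l x_{l'} G_{l l'}` is bounded by `M ((∑ |x_l|)² - ‖x‖²)`, and
Cauchy–Schwarz on the support of `x` bounds this by `(s - 1) M ‖x‖²` for `s`-sparse `x`; so
`δ_k ≤ (k - 1) M`. Conversely `e_i + e_j` is `2`-sparse with `‖A (e_i + e_j)‖² = 2 + 2 G_{ij}`,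
which forces `|G_{ij}| ≤ δ` for every admissible `δ`.
-/

open Finset Matrix

variable {ι κ : Type*} [Fintype ι]

lemma mutInc_nonneg (A : Matrix ι κ ℝ) : 0 ≤ mutInc A :=
  Real.sSup_nonneg fun _ ⟨_, _, _, hv⟩ => hv ▸ abs_nonneg _

lemma abs_colInner_le_mutInc [Finite κ] (A : Matrix ι κ ℝ) {i j : κ} (hij : i ≠ j) :
    |∑ k, A k i * A k j| ≤ mutInc A := by
  refine le_csSup ((Set.finite_range fun p : κ × κ => |∑ k, A k p.1 * A k p.2|).subset ?_).bddAbove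
    ⟨i, j, hij, rfl⟩
  rintro _ ⟨i, j, -, rfl⟩
  exact ⟨(i, j), rfl⟩

lemma mutInc_le {A : Matrix ι κ ℝ} {c : ℝ} (hc : 0 ≤ c)
    (h : ∀ i j, i ≠ j → |∑ k, A k i * A k j| ≤ c) : mutInc A ≤ c :=
  Real.sSup_le (fun _ ⟨i, j, hij, hv⟩ => hv ▸ h i j hij) hc

variable [Fintype κ]

lemma sq_sum_abs_le_sparsity_mul (x : κ → ℝ) :
    (∑ l, |x l|) ^ 2 ≤ sparsity x * ∑ l, x l ^ 2 := by
  set s := univ.filter (x · ≠ 0)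
  have hs : sparsity x = #s := by
    rw [sparsity, ← Set.ncard_coe_finset]
    simp [s]
  have habs : ∑ l, |x l| = ∑ l ∈ s, |x l| := by
    rw [sum_filter_of_ne]
    intro l _ h
    simpa using h
  have hsq : ∑ l, x l ^ 2 = ∑ l ∈ s, |x l| ^ 2 := by
    rw [sum_filter_of_ne]
    · simp
    · intro l _ h
      simpa using h
  rw [hs, habs, hsq]
  exact sq_sum_le_card_mul_sum_sq

lemma sum_sq_mulVec (A : Matrix ι κ ℝ) (x : κ → ℝ) :
    ∑ i, (A *ᵥ x) i ^ 2 = ∑ l, ∑ l', x l * x l' * ∑ i, A i l * A i l' := by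
  simp_rw [mulVec, dotProduct, sq, sum_mul_sum, mul_sum]
  rw [sum_comm]
  refine sum_congr rfl fun l _ => ?_
  rw [sum_comm]
  exact sum_congr rfl fun l' _ => sum_congr rfl fun i _ => by ring

lemma sum_sq_mulVec_single_add_single {A : Matrix ι κ ℝ} (hcols : ∀ j, ∑ k, A k j ^ 2 = 1)
    (i j : κ) :
    ∑ k, (A *ᵥ (Pi.single i 1 + Pi.single j 1)) k ^ 2 = 2 + 2 * ∑ k, A k i * A k j := by
  simp only [mulVec_add, mulVec_single_one, Pi.add_apply, col_apply, add_sq, sum_add_distrib,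
    hcols, mul_assoc, ← mul_sum]
  ring

lemma abs_sum_sq_mulVec_sub_le {A : Matrix ι κ ℝ} (hcols : ∀ j, ∑ k, A k j ^ 2 = 1)
    (x : κ → ℝ) :
    |∑ i, (A *ᵥ x) i ^ 2 - ∑ l, x l ^ 2| ≤ mutInc A * ((∑ l, |x l|) ^ 2 - ∑ l, x l ^ 2) := by
  have hentry : ∀ l l', |(∑ k, A k l * A k l') - if l = l' then 1 else 0| ≤
      mutInc A * (1 - if l = l' then 1 else 0) := by
    intro l l'
    split_ifs with h
    · subst h
      simp [← sq, hcols]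
    · simpa [h] using abs_colInner_le_mutInc A h
  calc |∑ i, (A *ᵥ x) i ^ 2 - ∑ l, x l ^ 2|
      = |∑ l, ∑ l', x l * x l' * ((∑ k, A k l * A k l') - if l = l' then 1 else 0)| := by
        rw [sum_sq_mulVec]
        simp only [mul_sub, sum_sub_distrib, mul_ite, mul_one, mul_zero, sum_ite_eq, mem_univ,
          if_true, sq]
    _ ≤ ∑ l, ∑ l', |x l| * |x l'| * (mutInc A * (1 - if l = l' then 1 else 0)) := by
        refine (abs_sum_le_sum_abs _ _).trans (sum_le_sum fun l _ => ?_)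
        refine (abs_sum_le_sum_abs _ _).trans (sum_le_sum fun l' _ => ?_)
        rw [abs_mul, abs_mul]
        exact mul_le_mul_of_nonneg_left (hentry l l') (by positivity)
    _ = mutInc A * ((∑ l, |x l|) ^ 2 - ∑ l, x l ^ 2) := by
        simp only [mul_sub, mul_one, mul_ite, mul_zero, sum_sub_distrib, sum_ite_eq, mem_univ,
          if_true, abs_mul_abs_self, sq, sum_mul, mul_sum]
        congr 1
        · exact sum_congr rfl fun _ _ => sum_congr rfl fun _ _ => by ring
        · exact sum_congr rfl fun _ _ => by ring

/-- `ripConst k A` is the infimum of the `δ` satisfying this. -/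
def IsRIPBound (k : ℕ) (A : Matrix ι κ ℝ) (δ : ℝ) : Prop :=
  0 ≤ δ ∧ ∀ x : κ → ℝ, sparsity x ≤ k →
    (1 - δ) * ∑ i, (x i) ^ 2 ≤ ∑ i, (A.mulVec x i) ^ 2 ∧
    ∑ i, (A.mulVec x i) ^ 2 ≤ (1 + δ) * ∑ i, (x i) ^ 2

lemma isRIPBound_iff {k : ℕ} {A : Matrix ι κ ℝ} {δ : ℝ} :
    IsRIPBound k A δ ↔ 0 ≤ δ ∧ ∀ x : κ → ℝ, sparsity x ≤ k →
      |∑ i, (A *ᵥ x) i ^ 2 - ∑ l, x l ^ 2| ≤ δ * ∑ l, x l ^ 2 := by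
  refine and_congr_right fun _ => forall_congr' fun x => imp_congr_right fun _ => ?_
  rw [abs_sub_le_iff]
  constructor <;> rintro ⟨h₁, h₂⟩ <;> constructor <;> linarith

lemma ripConst_le {k : ℕ} {A : Matrix ι κ ℝ} {δ : ℝ} (h : IsRIPBound k A δ) :
    ripConst k A ≤ δ :=
  csInf_le ⟨0, fun _ hδ => hδ.1⟩ h

lemma le_ripConst {k : ℕ} {A : Matrix ι κ ℝ} {c : ℝ} (hne : ∃ δ, IsRIPBound k A δ)
    (h : ∀ δ, IsRIPBound k A δ → c ≤ δ) : c ≤ ripConst k A :=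
  le_csInf hne h

lemma isRIPBound_sub_one_mul_mutInc {A : Matrix ι κ ℝ} (hcols : ∀ j, ∑ k, A k j ^ 2 = 1)
    {k : ℕ} (hk : 1 ≤ k) : IsRIPBound k A ((k - 1) * mutInc A) := by
  have hk' : (1 : ℝ) ≤ k := by exact_mod_cast hk
  have hM := mutInc_nonneg A
  refine isRIPBound_iff.2 ⟨mul_nonneg (by linarith) hM, fun x hx => ?_⟩
  have hx' : (sparsity x : ℝ) ≤ k := by exact_mod_cast hx
  have hsq : 0 ≤ ∑ l, x l ^ 2 := by positivity
  calc |∑ i, (A *ᵥ x) i ^ 2 - ∑ l, x l ^ 2|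
      ≤ mutInc A * ((∑ l, |x l|) ^ 2 - ∑ l, x l ^ 2) := abs_sum_sq_mulVec_sub_le hcols x
    _ ≤ mutInc A * (sparsity x * ∑ l, x l ^ 2 - ∑ l, x l ^ 2) := by
        gcongr
        exact sq_sum_abs_le_sparsity_mul x
    _ ≤ (k - 1) * mutInc A * ∑ l, x l ^ 2 := by nlinarith [mul_le_mul_of_nonneg_right hx' hsq]

lemma abs_colInner_le_of_isRIPBound {A : Matrix ι κ ℝ} (hcols : ∀ j, ∑ k, A k j ^ 2 = 1)
    {k : ℕ} (hk : 2 ≤ k) {δ : ℝ} (h : IsRIPBound k A δ) {i j : κ} (hij : i ≠ j) :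
    |∑ k, A k i * A k j| ≤ δ := by
  set x : κ → ℝ := Pi.single i 1 + Pi.single j 1
  have hsupp : ∀ l, l ≠ i ∧ l ≠ j → x l = 0 := fun l hl => by simp [x, hl.1, hl.2]
  have hx : sparsity x ≤ k := by
    refine le_trans ?_ hk
    calc sparsity x ≤ ({i, j} : Set κ).ncard :=
          Set.ncard_le_ncard fun l hl => by
            by_contra h
            simp only [Set.mem_insert_iff, Set.mem_singleton_iff, not_or] at h
            exact hl (hsupp l h)
      _ = 2 := Set.ncard_pair hij
  have hnorm : ∑ l, x l ^ 2 = 2 := by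
    rw [Fintype.sum_eq_add i j hij fun l hl => by simp [hsupp l hl]]
    simp [x, hij, hij.symm]
    norm_num
  have hdev := (isRIPBound_iff.1 h).2 x hx
  rw [sum_sq_mulVec_single_add_single hcols, hnorm, add_sub_cancel_left, abs_mul, abs_two] at hdev
  linarith

lemma mutInc_le_ripConst {A : Matrix ι κ ℝ} (hcols : ∀ j, ∑ k, A k j ^ 2 = 1) {k : ℕ}
    (hk : 2 ≤ k) : mutInc A ≤ ripConst k A :=
  le_ripConst ⟨_, isRIPBound_sub_one_mul_mutInc hcols (by omega)⟩ fun _ h =>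
    mutInc_le h.1 fun _ _ hij => abs_colInner_le_of_isRIPBound hcols hk h hij

theorem stmt15_general {m n : ℕ} (A : Matrix (Fin m) (Fin n) ℝ)
    (hcols : ∀ j, ∑ k, (A k j) ^ 2 = 1) :
    ripConst 2 A = mutInc A :=
  le_antisymm
    ((ripConst_le (isRIPBound_sub_one_mul_mutInc hcols one_le_two)).trans_eq (by norm_num))
    (mutInc_le_ripConst hcols le_rfl)

theorem stmt15 {m n : ℕ} (hn : 2 ≤ n) (A : Matrix (Fin m) (Fin n) ℝ)
    (hcols : ∀ j, ∑ k, (A k j) ^ 2 = 1) :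
    ripConst 2 A = mutInc A :=
  stmt15_general A hcols
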